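/- Let U_L, U_H > 0 be the utilities of two generative AI models and p_L, p_H > 0 their prompt prices. For ε ∈ (0,1) define the user's optimal payoff V(ε) = max over s ∈ {L, H} and n ∈ ℕ of (1 − ε^n)·U_s − n·p_s (this maximum exists since the payoff tends to −∞ as n → ∞). Then V is nonincreasing on (0,1); moreover, for ε₁ < ε₂ in (0,1), if p_s < (1 − ε₁)·U_s for some s ∈ {L, H}, then V(ε₁) > V(ε₂). -/

import Mathlib

/-! Every fixed plan `(s, n)` pays `(1 - εⁿ) U_s - n p_s`, which is antitone in `ε` and strictly
so once `n ≥ 1`; hence the optimal plan at `ε₂` does at least as well at `ε₁`. The only plan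
that does not strictly improve is `n = 0`, worth `0`, and a price `p_s < (1 - ε₁) U_s` makes a
single prompt strictly profitable at `ε₁`. -/

open Set

def payoff (ε U p : ℝ) (n : ℕ) : ℝ := (1 - ε ^ n) * U - n * p

@[simp]
lemma payoff_zero (ε U p : ℝ) : payoff ε U p 0 = 0 := by
  simp [payoff]

lemma payoff_one_pos {ε U p : ℝ} (h : p < (1 - ε) * U) : 0 < payoff ε U p 1 := by
  simp only [payoff, pow_one, Nat.cast_one, one_mul]
  linarith

lemma payoff_antitone_of_nonneg {ε₁ ε₂ U : ℝ} (p : ℝ) (n : ℕ) (hε₁ : 0 ≤ ε₁) (hε : ε₁ ≤ ε₂)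
    (hU : 0 ≤ U) : payoff ε₂ U p n ≤ payoff ε₁ U p n := by
  unfold payoff
  gcongr

lemma payoff_strictAnti_of_pos {ε₁ ε₂ U : ℝ} (p : ℝ) {n : ℕ} (hn : n ≠ 0) (hε₁ : 0 ≤ ε₁)
    (hε : ε₁ < ε₂) (hU : 0 < U) : payoff ε₂ U p n < payoff ε₁ U p n := by
  unfold payoff
  gcongr

theorem user_optimal_payoff_antitone_in_ambiguity_general
    (UL UH pL pH : ℝ) (hUL : 0 < UL) (hUH : 0 < UH)
    (V : ℝ → ℝ)
    (hV : ∀ ε ∈ Set.Ioo (0 : ℝ) 1,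
      IsGreatest {x : ℝ | ∃ n : ℕ,
        x = (1 - ε ^ n) * UL - n * pL ∨ x = (1 - ε ^ n) * UH - n * pH} (V ε)) :
    (∀ ε₁ ∈ Set.Ioo (0 : ℝ) 1, ∀ ε₂ ∈ Set.Ioo (0 : ℝ) 1,
      ε₁ ≤ ε₂ → V ε₂ ≤ V ε₁) ∧
    (∀ ε₁ ∈ Set.Ioo (0 : ℝ) 1, ∀ ε₂ ∈ Set.Ioo (0 : ℝ) 1, ε₁ < ε₂ →
      (pL < (1 - ε₁) * UL ∨ pH < (1 - ε₁) * UH) → V ε₂ < V ε₁) := by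
  have attained (ε) (hε : ε ∈ Ioo (0 : ℝ) 1) :
      ∃ n, V ε = payoff ε UL pL n ∨ V ε = payoff ε UH pH n := (hV ε hε).1
  have le_V (ε) (hε : ε ∈ Ioo (0 : ℝ) 1) (n : ℕ) :
      payoff ε UL pL n ≤ V ε ∧ payoff ε UH pH n ≤ V ε :=
    ⟨(hV ε hε).2 ⟨n, .inl rfl⟩, (hV ε hε).2 ⟨n, .inr rfl⟩⟩
  constructor
  · intro ε₁ h₁ ε₂ h₂ hε
    obtain ⟨n, h | h⟩ := attained ε₂ h₂ <;> rw [h]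
    · exact (payoff_antitone_of_nonneg pL n h₁.1.le hε hUL.le).trans (le_V ε₁ h₁ n).1
    · exact (payoff_antitone_of_nonneg pH n h₁.1.le hε hUH.le).trans (le_V ε₁ h₁ n).2
  · intro ε₁ h₁ ε₂ h₂ hε hcheap
    have V_pos : 0 < V ε₁ := by
      rcases hcheap with hc | hc
      · exact (payoff_one_pos hc).trans_le (le_V ε₁ h₁ 1).1
      · exact (payoff_one_pos hc).trans_le (le_V ε₁ h₁ 1).2
    obtain ⟨n, h | h⟩ := attained ε₂ h₂ <;> rw [h] <;> rcases eq_or_ne n 0 with rfl | hn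
    · simpa using V_pos
    · exact (payoff_strictAnti_of_pos pL hn h₁.1.le hε hUL).trans_le (le_V ε₁ h₁ n).1
    · simpa using V_pos
    · exact (payoff_strictAnti_of_pos pH hn h₁.1.le hε hUH).trans_le (le_V ε₁ h₁ n).2

/-- Proposition 2 of the paper: with two models of utilities
`U_L, U_H > 0` and prices `p_L, p_H > 0`, let `V ε` be the user's optimal
payoff, i.e. the maximum of `(1 - ε^n)·U_s - n·p_s` over `s ∈ {L,H}` and
`n ∈ ℕ`. Then `V` is nonincreasing on `(0,1)`, and for `ε₁ < ε₂` in `(0,1)`,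
if `p_s < (1-ε₁)·U_s` for some model `s`, then `V ε₁ > V ε₂`. -/
theorem user_optimal_payoff_antitone_in_ambiguity
    (UL UH pL pH : ℝ) (hUL : 0 < UL) (hUH : 0 < UH)
    (hpL : 0 < pL) (hpH : 0 < pH)
    (V : ℝ → ℝ)
    (hV : ∀ ε ∈ Set.Ioo (0 : ℝ) 1,
      IsGreatest {x : ℝ | ∃ n : ℕ,
        x = (1 - ε ^ n) * UL - n * pL ∨ x = (1 - ε ^ n) * UH - n * pH} (V ε)) :
    (∀ ε₁ ∈ Set.Ioo (0 : ℝ) 1, ∀ ε₂ ∈ Set.Ioo (0 : ℝ) 1,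
      ε₁ ≤ ε₂ → V ε₂ ≤ V ε₁) ∧
    (∀ ε₁ ∈ Set.Ioo (0 : ℝ) 1, ∀ ε₂ ∈ Set.Ioo (0 : ℝ) 1, ε₁ < ε₂ →
      (pL < (1 - ε₁) * UL ∨ pH < (1 - ε₁) * UH) → V ε₂ < V ε₁) :=
  user_optimal_payoff_antitone_in_ambiguity_general UL UH pL pH hUL hUH V hV
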